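/- Let f be a decreasing C¹ function on [0,T] extended by f(τ)=f(0) for τ<0, satisfying (1/ε)∫_{t-ε}^t f(τ)dτ - f(t) ≤ C₀ ε^α for all ε>0, t∈[0,T]. Then for every t ∈ [0,T] and ε > 0, (1/2) ∫_{t-ε/2}^{t} (-f'(s)) ds ≤ C₀ ε^α; consequently f(s) - f(t) ≤ 2^{1+α} C₀ (t-s)^α for s < t. -/

import Mathlib

/-!
Extend `f` to the left by `f 0`; the extension `g` is antitone on `(-∞, T]`. Splitting
`[t - ε, t]` into halves and bounding `g` on each half by its value at the right endpoint shows
that the average of `g` over `[t - ε, t]` is at least `(g (t - ε/2) + g t) / 2`, so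
`g (t - ε/2) - g t` is at most twice the averaged defect, hence at most `2 C₀ ε^α`. The
fundamental theorem of calculus, which survives the kink of `g` at `0`, identifies this drop with
`∫_{t-ε/2}^t (-g')`, and the choice `ε = 2 (t - s)` gives the Hölder bound.
-/

open MeasureTheory intervalIntegral Set Topology

theorem AntitoneOn.integral_neg_deriv_eq_sub {g : ℝ → ℝ} {a b : ℝ} {s : Set ℝ}
    (hab : a ≤ b) (hs : s.Countable) (hg : AntitoneOn g (Icc a b))
    (hc : ContinuousOn g (Icc a b))
    (hd : ∀ x ∈ Ioo a b \ s, DifferentiableAt ℝ g x) :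
    ∫ x in a..b, -deriv g x = g a - g b := by
  rw [← uIcc_of_le hab] at hg
  have hint : IntervalIntegrable (deriv g) volume a b := by
    simpa [deriv.neg', Pi.neg_def] using hg.neg.intervalIntegrable_deriv.neg
  rw [intervalIntegral.integral_neg,
    integral_eq_of_hasDerivAt_off_countable_of_le g (deriv g) hab hs hc
      (fun x hx => (hd x hx).hasDerivAt) hint, neg_sub]

theorem AntitoneOn.mul_le_intervalIntegral {g : ℝ → ℝ} {a b : ℝ} (hab : a ≤ b)
    (hg : AntitoneOn g (Icc a b)) : (b - a) * g b ≤ ∫ x in a..b, g x := by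
  have hint : IntervalIntegrable g volume a b := (uIcc_of_le hab ▸ hg).intervalIntegrable
  simpa using integral_mono_on hab intervalIntegrable_const hint
    fun x hx => hg hx (right_mem_Icc.2 hab) hx.2

theorem AntitoneOn.sub_le_two_mul_average_sub {g : ℝ → ℝ} {t ε : ℝ} (hε : 0 < ε)
    (hg : AntitoneOn g (Icc (t - ε) t)) :
    g (t - ε / 2) - g t ≤ 2 * ((1 / ε) * (∫ τ in (t - ε)..t, g τ) - g t) := by
  have h₁ : t - ε ≤ t - ε / 2 := by linarith
  have h₂ : t - ε / 2 ≤ t := by linarith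
  have hg₁ : AntitoneOn g (Icc (t - ε) (t - ε / 2)) := hg.mono (Icc_subset_Icc le_rfl h₂)
  have hg₂ : AntitoneOn g (Icc (t - ε / 2) t) := hg.mono (Icc_subset_Icc h₁ le_rfl)
  have hhalves : ε / 2 * (g (t - ε / 2) + g t) ≤ ∫ τ in (t - ε)..t, g τ := by
    rw [← integral_add_adjacent_intervals (uIcc_of_le h₁ ▸ hg₁).intervalIntegrable
      (uIcc_of_le h₂ ▸ hg₂).intervalIntegrable]
    have h₁' := hg₁.mul_le_intervalIntegral h₁
    have h₂' := hg₂.mul_le_intervalIntegral h₂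
    ring_nf at h₁' h₂' ⊢
    linarith
  have := mul_le_mul_of_nonneg_left hhalves (one_div_nonneg.2 hε.le)
  rw [← mul_assoc, one_div_mul_eq_div, div_div_cancel_left' hε.ne'] at this
  linarith

theorem differentiableAt_comp_max_zero {f : ℝ → ℝ} {T x : ℝ}
    (hf : DifferentiableOn ℝ f (Icc 0 T)) (hxT : x < T) (hx : x ≠ 0) :
    DifferentiableAt ℝ (fun τ => f (max τ 0)) x := by
  rcases hx.lt_or_gt with hx | hx
  · have : (fun τ => f (max τ 0)) =ᶠ[𝓝 x] fun _ => f 0 := by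
      filter_upwards [Iio_mem_nhds hx] with τ hτ
      rw [max_eq_right hτ.le]
    exact (differentiableAt_const _).congr_of_eventuallyEq this
  · have : (fun τ => f (max τ 0)) =ᶠ[𝓝 x] f := by
      filter_upwards [Ioi_mem_nhds hx] with τ hτ
      rw [max_eq_left hτ.le]
    exact ((hf x ⟨hx.le, hxT.le⟩).differentiableAt (Icc_mem_nhds hx hxT)).congr_of_eventuallyEq
      this

theorem stmt5_general (T : ℝ) (hT : 0 < T) (f : ℝ → ℝ)
    (hf : ContDiffOn ℝ 1 f (Set.Icc 0 T)) (hmono : ∀ t ∈ Set.Icc (0 : ℝ) T, deriv f t ≤ 0)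
    (C₀ α : ℝ)
    (h : ∀ ε > (0 : ℝ), ∀ t ∈ Set.Icc (0 : ℝ) T,
      (1 / ε) * (∫ τ in (t - ε)..t, f (max τ 0)) - f t ≤ C₀ * ε ^ α) :
    (∀ t ∈ Set.Icc (0 : ℝ) T, ∀ ε > (0 : ℝ),
      (1 / 2) * (∫ s in (t - ε / 2)..t, -(deriv (fun τ => f (max τ 0)) s)) ≤ C₀ * ε ^ α) ∧
    (∀ s ∈ Set.Icc (0 : ℝ) T, ∀ t ∈ Set.Icc (0 : ℝ) T, s < t →
      f s - f t ≤ 2 ^ (1 + α) * C₀ * (t - s) ^ α) := by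
  set g : ℝ → ℝ := fun τ => f (max τ 0)
  have hdiff : DifferentiableOn ℝ f (Icc 0 T) := hf.differentiableOn one_ne_zero
  have hanti : AntitoneOn f (Icc 0 T) :=
    antitoneOn_of_deriv_nonpos (convex_Icc 0 T) hf.continuousOn (hdiff.mono interior_subset)
      fun x hx => hmono x (interior_subset hx)
  have hmaps : MapsTo (fun τ => max τ 0) (Iic T) (Icc 0 T) :=
    fun τ hτ => ⟨le_max_right τ 0, max_le hτ hT.le⟩
  have hganti : AntitoneOn g (Iic T) :=
    hanti.comp_MonotoneOn ((monotone_id.max monotone_const).monotoneOn _) hmaps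
  have hgcont : ContinuousOn g (Iic T) :=
    hf.continuousOn.comp (continuous_id.max continuous_const).continuousOn hmaps
  have hgf : ∀ t, 0 ≤ t → g t = f t := fun t ht => congrArg f (max_eq_left ht)
  have hdrop : ∀ t ∈ Icc 0 T, ∀ ε > 0, g (t - ε / 2) - g t ≤ 2 * (C₀ * ε ^ α) := by
    intro t ht ε hε
    have hsub : Icc (t - ε) t ⊆ Iic T := Icc_subset_Iic_self.trans (Iic_subset_Iic.2 ht.2)
    have := (hganti.mono hsub).sub_le_two_mul_average_sub hε
    linarith [h ε hε t ht, hgf t ht.1]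
  refine ⟨fun t ht ε hε => ?_, fun s hs t ht hst => ?_⟩
  · have hsub : Icc (t - ε / 2) t ⊆ Iic T :=
      Icc_subset_Iic_self.trans (Iic_subset_Iic.2 ht.2)
    rw [(hganti.mono hsub).integral_neg_deriv_eq_sub (by linarith) (countable_singleton 0)
      (hgcont.mono hsub) fun x hx =>
        differentiableAt_comp_max_zero hdiff (hx.1.2.trans_le ht.2) hx.2]
    linarith [hdrop t ht ε hε]
  · have := hdrop t ht (2 * (t - s)) (by linarith)
    rw [show t - 2 * (t - s) / 2 = s by ring, Real.mul_rpow zero_le_two (sub_nonneg.2 hst.le),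
      hgf s hs.1, hgf t ht.1] at this
    rw [Real.rpow_add two_pos, Real.rpow_one]
    linarith

/-- For a decreasing `C¹` function `f` on `[0,T]` (extended by `f(0)` for negative times)
satisfying the averaged bound `(1/ε)∫_{t-ε}^t f - f(t) ≤ C₀ ε^α`, one has
`(1/2) ∫_{t-ε/2}^t (-f') ≤ C₀ ε^α`, and consequently `f(s) - f(t) ≤ 2^{1+α} C₀ (t-s)^α`
for `s < t`. -/
theorem stmt5 (T : ℝ) (hT : 0 < T) (f : ℝ → ℝ)
    (hf : ContDiffOn ℝ 1 f (Set.Icc 0 T)) (hmono : ∀ t ∈ Set.Icc (0 : ℝ) T, deriv f t ≤ 0)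
    (C₀ α : ℝ) (hC₀ : 0 < C₀) (hα : 0 < α) (hα1 : α < 1)
    (h : ∀ ε > (0 : ℝ), ∀ t ∈ Set.Icc (0 : ℝ) T,
      (1 / ε) * (∫ τ in (t - ε)..t, f (max τ 0)) - f t ≤ C₀ * ε ^ α) :
    (∀ t ∈ Set.Icc (0 : ℝ) T, ∀ ε > (0 : ℝ),
      (1 / 2) * (∫ s in (t - ε / 2)..t, -(deriv (fun τ => f (max τ 0)) s)) ≤ C₀ * ε ^ α) ∧
    (∀ s ∈ Set.Icc (0 : ℝ) T, ∀ t ∈ Set.Icc (0 : ℝ) T, s < t →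
      f s - f t ≤ 2 ^ (1 + α) * C₀ * (t - s) ^ α) :=
  stmt5_general T hT f hf hmono C₀ α h
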